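/- arXiv:2002.06533 — 2 statements merged into one kernel-verified Lean document; each statement's English description precedes it below -/
import Mathlib

section
/- If P is a random variable with CDF F(p) = 1/ρ - 1/(μ(1-ρ)p) on [f(0), f(1)] (and F = 0 below f(0), F = 1 above f(1)), then E[P] = -log(1-ρ)/(μ(1-ρ)). -/
/-!
On `(0, ∞)` the tail `1 - F` equals `1` up to `a = f(0)`, then `(1 - 1/ρ) + p⁻¹ / (μ(1-ρ))`
up to `b = f(1) = a / (1 - ρ)`, and `0` afterwards. The constant parts integrate to
`a + (b - a)(1 - 1/ρ) = 0`, so only the `p⁻¹` part survives, giving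
`log (b / a) / (μ(1-ρ)) = -log (1 - ρ) / (μ(1-ρ))`.
-/

open MeasureTheory Set Real

theorem integral_Ioi_eq_intervalIntegral_of_eqOn_Ioi {E : Type*} [NormedAddCommGroup E]
    [NormedSpace ℝ E] {μ : Measure ℝ} {f : ℝ → E} {a b : ℝ}
    (hf : IntervalIntegrable f μ a b) (hf0 : EqOn f 0 (Ioi b)) :
    ∫ x in Ioi a, f x ∂μ = ∫ x in a..b, f x ∂μ := by
  have hf0int : IntegrableOn f (Ioi b) μ := integrableOn_zero.congr_fun hf0.symm measurableSet_Ioi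
  rw [← intervalIntegral.integral_interval_add_Ioi' hf hf0int,
    setIntegral_congr_fun measurableSet_Ioi hf0]
  simp

theorem integral_Ioi_eq_add_of_eqOn_Ioc_Ioc {E : Type*} [NormedAddCommGroup E]
    [NormedSpace ℝ E] {μ : Measure ℝ} {f g h : ℝ → E} {a b c : ℝ}
    (hab : a ≤ b) (hbc : b ≤ c)
    (hg : IntervalIntegrable g μ a b) (hh : IntervalIntegrable h μ b c)
    (hfg : EqOn f g (Ioc a b)) (hfh : EqOn f h (Ioc b c)) (hf0 : EqOn f 0 (Ioi c)) :
    ∫ x in Ioi a, f x ∂μ = ∫ x in a..b, g x ∂μ + ∫ x in b..c, h x ∂μ := by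
  rw [← uIoc_of_le hab] at hfg
  rw [← uIoc_of_le hbc] at hfh
  have hfab : IntervalIntegrable f μ a b := hg.congr hfg.symm
  have hfbc : IntervalIntegrable f μ b c := hh.congr hfh.symm
  rw [integral_Ioi_eq_intervalIntegral_of_eqOn_Ioi (hfab.trans hfbc) hf0,
    ← intervalIntegral.integral_add_adjacent_intervals hfab hfbc,
    intervalIntegral.integral_congr_ae (ae_of_all _ hfg),
    intervalIntegral.integral_congr_ae (ae_of_all _ hfh)]

theorem intervalIntegrable_inv_of_pos {a b : ℝ} (ha : 0 < a) (hb : 0 < b) :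
    IntervalIntegrable (fun x => x⁻¹) volume a b :=
  intervalIntegrable_inv_iff.2 <| Or.inr fun h0 => by
    rcases mem_uIcc.1 h0 with h | h <;> linarith [h.1]

theorem integral_const_add_mul_inv {a b : ℝ} (ha : 0 < a) (hb : 0 < b) (k c : ℝ) :
    ∫ x in a..b, (k + c * x⁻¹) = (b - a) * k + c * log (b / a) := by
  rw [intervalIntegral.integral_add intervalIntegrable_const
      ((intervalIntegrable_inv_of_pos ha hb).const_mul c),
    intervalIntegral.integral_const_mul, integral_inv_of_pos ha hb,
    intervalIntegral.integral_const, smul_eq_mul]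

theorem mean_random_price (ρ μ : ℝ) (hρ0 : 0 < ρ) (hρ1 : ρ < 1) (hμ : 0 < μ)
    (F : ℝ → ℝ)
    (hF : ∀ p : ℝ, F p =
      if p ≤ ρ / (μ * (1 - ρ)) then 0
      else if p ≤ ρ / (μ * (1 - ρ)^2) then 1 / ρ - 1 / (μ * (1 - ρ) * p)
      else 1) :
    ∫ p in Set.Ioi (0:ℝ), (1 - F p) = -Real.log (1 - ρ) / (μ * (1 - ρ)) := by
  set c := μ * (1 - ρ)
  set a := ρ / c
  set b := ρ / (μ * (1 - ρ)^2)
  have h1ρ : 0 < 1 - ρ := by linarith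
  have hc0 : 0 < c := by positivity
  have ha0 : 0 < a := by positivity
  have hba : b = a / (1 - ρ) := by simp only [a, b, c]; field_simp
  have hab : a < b := by rw [hba, lt_div_iff₀ h1ρ]; nlinarith
  have hb0 : 0 < b := ha0.trans hab
  have hF1 : EqOn (fun p => 1 - F p) (fun _ => 1) (Ioc 0 a) := fun p hp => by
    simp [hF p, hp.2]
  have hF2 : EqOn (fun p => 1 - F p) (fun p => (1 - 1 / ρ) + c⁻¹ * p⁻¹) (Ioc a b) :=
    fun p hp => by
      have hp0 : 0 < p := ha0.trans hp.1
      simp only [hF p, if_neg hp.1.not_ge, if_pos hp.2]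
      field_simp
      ring
  have hF3 : EqOn (fun p => 1 - F p) 0 (Ioi b) := fun p hp => by
    simp [hF p, (hab.trans (mem_Ioi.1 hp)).not_ge, (mem_Ioi.1 hp).not_ge]
  rw [integral_Ioi_eq_add_of_eqOn_Ioc_Ioc ha0.le hab.le intervalIntegrable_const
      (intervalIntegrable_const.add ((intervalIntegrable_inv_of_pos ha0 hb0).const_mul _))
      hF1 hF2 hF3,
    intervalIntegral.integral_const, integral_const_add_mul_inv ha0 hb0,
    hba, div_div_cancel_left' ha0.ne', log_inv]
  simp only [a, smul_eq_mul]
  field_simp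
  ring
end

section
/- With B(y) = 1 - 1/ρ + (1/ρ)(1/(1-ρ)² - μy)^{-1/2} on [0, 1/(μ(1-ρ)²) - 1/μ], the mean payment ∫₀^{1/(μ(1-ρ)²) - 1/μ} (1 - B(y)) dy equals ρ/(μ(1-ρ)²). -/
/-!
Writing `c = 1 / (1 - ρ)²`, the integrand is `1 - B y = ρ⁻¹ (1 - (c - μ y)^(-1/2))`. The
substitution `x = c - μ y` turns the second term into `∫ x^(-1/2) dx = 2 √x`, and the endpoints
of the integral are exactly where `√(c - μ y)` equals `1 / (1 - ρ)` and `1`.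
-/

open Real intervalIntegral MeasureTheory

/-- For `x < 0` both sides vanish: `√x = 0`, and the power carries the factor `cos (-π / 2)`. -/
theorem Real.rpow_neg_one_half (x : ℝ) : x ^ (-(1 / 2) : ℝ) = (√x)⁻¹ := by
  rcases le_or_gt 0 x with hx | hx
  · rw [rpow_neg hx, sqrt_eq_rpow]
  · rw [rpow_def_of_neg hx, sqrt_eq_zero_of_nonpos hx.le, inv_zero, neg_mul, cos_neg,
      one_div_mul_eq_div, cos_pi_div_two, mul_zero]

theorem integral_inv_sqrt (a b : ℝ) : ∫ x in a..b, (√x)⁻¹ = 2 * (√b - √a) := by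
  simp_rw [← rpow_neg_one_half, integral_rpow (Or.inl (by norm_num : (-1 : ℝ) < -(1 / 2))),
    sqrt_eq_rpow]
  norm_num
  ring

theorem intervalIntegrable_inv_sqrt_const_sub_mul (c μ a b : ℝ) :
    IntervalIntegrable (fun y ↦ (√(c - μ * y))⁻¹) volume a b := by
  rcases eq_or_ne μ 0 with rfl | hμ
  · simp
  have h := ((intervalIntegrable_rpow' (a := c - μ * a) (b := c - μ * b)
    (by norm_num : (-1 : ℝ) < -(1 / 2))).comp_sub_left c).comp_mul_left (c := μ)
  simpa only [sub_sub_cancel, mul_div_cancel_left₀ _ hμ, rpow_neg_one_half] using h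

theorem integral_inv_sqrt_const_sub_mul (c a b : ℝ) {μ : ℝ} (hμ : μ ≠ 0) :
    ∫ y in a..b, (√(c - μ * y))⁻¹ = 2 / μ * (√(c - μ * a) - √(c - μ * b)) := by
  rw [integral_comp_sub_mul (fun x ↦ (√x)⁻¹) hμ, integral_inv_sqrt, smul_eq_mul]
  ring

theorem mean_payment_continuous_priority (ρ μ : ℝ) (hρ0 : 0 < ρ) (hρ1 : ρ < 1) (hμ : 0 < μ)
    (B : ℝ → ℝ)
    (hB : ∀ y : ℝ, B y = 1 - 1 / ρ + (1 / ρ) * (1 / Real.sqrt (1 / (1 - ρ)^2 - μ * y))) :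
    ∫ y in (0:ℝ)..(1 / (μ * (1 - ρ)^2) - 1 / μ), (1 - B y) = ρ / (μ * (1 - ρ)^2) := by
  set c := 1 / (1 - ρ) ^ 2
  set b := 1 / (μ * (1 - ρ) ^ 2) - 1 / μ
  have h1ρ : 0 < 1 - ρ := by linarith
  have hsqrt_start : √c = 1 / (1 - ρ) := by
    rw [show c = (1 / (1 - ρ)) ^ 2 by rw [div_pow, one_pow], sqrt_sq (by positivity)]
  have hsqrt_end : √(c - μ * b) = 1 := by
    rw [← sqrt_one]; congr 1; simp only [c, b]; field_simp; ring
  have hintegrand : (fun y ↦ 1 - B y) = fun y ↦ ρ⁻¹ * (1 - (√(c - μ * y))⁻¹) := by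
    ext y; rw [hB]; ring
  rw [hintegrand, intervalIntegral.integral_const_mul, integral_sub intervalIntegrable_const
    (intervalIntegrable_inv_sqrt_const_sub_mul c μ 0 b), intervalIntegral.integral_const,
    integral_inv_sqrt_const_sub_mul c 0 b hμ.ne', mul_zero, sub_zero, sub_zero,
    hsqrt_start, hsqrt_end]
  simp only [b, smul_eq_mul]
  field_simp
  ring
end
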